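/- Assume that for every (t,ω) ∈ [0,T] × Ω there exists ω̂ ∈ 𝒜(t,ω) such that X_u(ω̂) < X_t(ω) for all u ∈ (t,T]. Then σ* satisfies conditions (A) and (B): for any stopping time τ and any ω ∈ Ω, (A) if τ(ω) > σ*(ω) then R(σ*(ω),ω;τ,ω') > R(σ*(ω),ω;σ*,ω') for some ω' ∈ 𝒜(σ*(ω),ω), and (B) if τ(ω) < σ*(ω) then R(τ(ω),ω;τ,ω') > R(τ(ω),ω;σ*,ω') for all ω' ∈ 𝒜(τ(ω),ω). -/

import Mathlib

open Set

noncomputable section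

namespace SellingRegret

/-- Running maximum `X*_t(ω) = sup_{s ∈ [0,t]} X_s(ω)`, where `X_s(ω) = ω s`. -/
def Mstar (ω : ℝ → ℝ) (t : ℝ) : ℝ :=
  sSup (ω '' Set.Icc 0 t)

/-- `𝒜(t,ω)`: the trajectories in `Ω` agreeing with `ω` on `[0,t]`. -/
def Hist (Ω : Set (ℝ → ℝ)) (t : ℝ) (ω : ℝ → ℝ) : Set (ℝ → ℝ) :=
  {ω' ∈ Ω | ∀ s ∈ Set.Icc 0 t, ω' s = ω s}

/-- A stopping time: a map `τ : Ω → [0,T]` such that whenever `τ(ω) ≤ t` and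
`ω'` agrees with `ω` on `[0,t]`, one has `τ(ω') = τ(ω)`. -/
def IsStoppingTime (T : ℝ) (Ω : Set (ℝ → ℝ)) (τ : (ℝ → ℝ) → ℝ) : Prop :=
  (∀ ω ∈ Ω, τ ω ∈ Set.Icc 0 T) ∧
  ∀ ω ∈ Ω, ∀ t ∈ Set.Icc 0 T, τ ω ≤ t →
    ∀ ω' ∈ Ω, (∀ s ∈ Set.Icc 0 t, ω' s = ω s) → τ ω' = τ ω

/-- Estimated regret `R(t,ω;τ,ω') = max{X*_{τ(ω')}(ω') − X_{τ(ω')}(ω'), ψ(τ(ω'),ω')}`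
(it depends only on `τ` and `ω'`). -/
def regret (ψ : ℝ → (ℝ → ℝ) → ℝ) (τ : (ℝ → ℝ) → ℝ) (ω' : ℝ → ℝ) : ℝ :=
  max (Mstar ω' (τ ω') - ω' (τ ω')) (ψ (τ ω') ω')

/-- Worst-case estimated regret `ℛ(t,ω;τ) = sup_{ω' ∈ 𝒜(t,ω)} R(t,ω;τ,ω')`,
valued in `[0,∞]`. -/
def worstRegret (Ω : Set (ℝ → ℝ)) (ψ : ℝ → (ℝ → ℝ) → ℝ)
    (t : ℝ) (ω : ℝ → ℝ) (τ : (ℝ → ℝ) → ℝ) : ENNReal :=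
  ⨆ ω' ∈ Hist Ω t ω, ENNReal.ofReal (regret ψ τ ω')

/-- `σ*(ω) = inf {s ∈ [0,T] : X*_s(ω) − X_s(ω) ≥ ψ(s,ω)}`. -/
def sigmaStar (T : ℝ) (ψ : ℝ → (ℝ → ℝ) → ℝ) (ω : ℝ → ℝ) : ℝ :=
  sInf {s ∈ Set.Icc 0 T | ψ s ω ≤ Mstar ω s - ω s}

/-- `τ ∈ 𝒯_t(ω)`: `τ(ω') ≥ t` for all `ω' ∈ 𝒜(t,ω)`. -/
def Admissible (Ω : Set (ℝ → ℝ)) (t : ℝ) (ω : ℝ → ℝ) (τ : (ℝ → ℝ) → ℝ) : Prop :=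
  ∀ ω' ∈ Hist Ω t ω, t ≤ τ ω'

/-- `σ` is optimal with respect to `𝒜(t,ω)`. -/
def OptimalAt (T : ℝ) (Ω : Set (ℝ → ℝ)) (ψ : ℝ → (ℝ → ℝ) → ℝ)
    (t : ℝ) (ω : ℝ → ℝ) (σ : (ℝ → ℝ) → ℝ) : Prop :=
  IsStoppingTime T Ω σ ∧ Admissible Ω t ω σ ∧
  ∀ τ, IsStoppingTime T Ω τ → Admissible Ω t ω τ →
    worstRegret Ω ψ t ω σ ≤ worstRegret Ω ψ t ω τ

/-- `σ` is Pareto optimal with respect to `𝒜(t,ω)`. -/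
def ParetoOptimalAt (T : ℝ) (Ω : Set (ℝ → ℝ)) (ψ : ℝ → (ℝ → ℝ) → ℝ)
    (t : ℝ) (ω : ℝ → ℝ) (σ : (ℝ → ℝ) → ℝ) : Prop :=
  IsStoppingTime T Ω σ ∧ Admissible Ω t ω σ ∧
  ¬ ∃ τ, IsStoppingTime T Ω τ ∧ Admissible Ω t ω τ ∧
      (∀ ω' ∈ Hist Ω t ω, regret ψ τ ω' ≤ regret ψ σ ω') ∧
      ∃ ω'' ∈ Hist Ω t ω, regret ψ τ ω'' < regret ψ σ ω''

/-- `σ` is perfect: optimal and Pareto optimal with respect to `𝒜(t,ω)`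
whenever it is admissible for `𝒜(t,ω)`. -/
def Perfect (T : ℝ) (Ω : Set (ℝ → ℝ)) (ψ : ℝ → (ℝ → ℝ) → ℝ)
    (σ : (ℝ → ℝ) → ℝ) : Prop :=
  IsStoppingTime T Ω σ ∧
  ∀ t ∈ Set.Icc 0 T, ∀ ω ∈ Ω, Admissible Ω t ω σ →
    OptimalAt T Ω ψ t ω σ ∧ ParetoOptimalAt T Ω ψ t ω σ

/-- Conditions (A) and (B) of Theorem 2 for a stopping time `σ`. -/
def CondAB (T : ℝ) (Ω : Set (ℝ → ℝ)) (ψ : ℝ → (ℝ → ℝ) → ℝ)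
    (σ : (ℝ → ℝ) → ℝ) : Prop :=
  ∀ τ, IsStoppingTime T Ω τ → ∀ ω ∈ Ω,
    (σ ω < τ ω → ∃ ω' ∈ Hist Ω (σ ω) ω, regret ψ σ ω' < regret ψ τ ω') ∧
    (τ ω < σ ω → ∀ ω' ∈ Hist Ω (τ ω) ω, regret ψ σ ω' < regret ψ τ ω')

/-- `Ω = C([0,T],ℝ)`: all trajectories continuous on `[0,T]`. -/
def OmegaC (T : ℝ) : Set (ℝ → ℝ) :=
  {ω | ContinuousOn ω (Set.Icc 0 T)}

/-- The two-sided Lipschitz corridor of Example 2: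
`−L₁(t−s) ≤ ω(t) − ω(s) ≤ L₂(t−s)` for `0 ≤ s ≤ t ≤ T`. -/
def OmegaL (T L₁ L₂ : ℝ) : Set (ℝ → ℝ) :=
  {ω | ∀ s t : ℝ, 0 ≤ s → s ≤ t → t ≤ T →
    -L₁ * (t - s) ≤ ω t - ω s ∧ ω t - ω s ≤ L₂ * (t - s)}

/-!
`σ*` stops the first time the drawdown `X* − X` reaches `ψ`. The set of such times is closed, so
`σ*` belongs to it, and whether a time `s ≤ t` belongs to it is read off the path on `[0, t]`; hence
`σ*` is a stopping time. Since `ψ` is strictly decreasing with `ψ(T) = 0` and the drawdown vanishes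
at `0`, we have `σ* > 0`, and continuity from the left gives drawdown `= ψ` at `σ*`, so the regret
of `σ*` is `ψ(σ*)`.

(A) If `τ` stops after `σ*`, take a continuation staying strictly below `X_{σ*}` after `σ*`. On
it `σ*` is unchanged and `τ` still stops after `σ*`, where the drawdown strictly exceeds the
drawdown at `σ*`, which is the regret of `σ*`.

(B) If `τ` stops before `σ*`, the drawdown at `τ` is still below `ψ`, so the regret of `τ` is
`ψ(τ)`; on every continuation `σ*` still comes strictly later, and `ψ(σ*) < ψ(τ)`.
-/

section RunningMax

variable {T : ℝ} {ω : ℝ → ℝ}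

lemma Mstar_zero (ω : ℝ → ℝ) : Mstar ω 0 = ω 0 := by
  simp [Mstar]

lemma Mstar_congr {ω' : ℝ → ℝ} {t s : ℝ} (h : ∀ u ∈ Icc 0 t, ω' u = ω u) (hs : s ≤ t) :
    Mstar ω' s = Mstar ω s := by
  unfold Mstar
  rw [image_congr fun u hu => h u ⟨hu.1, hu.2.trans hs⟩]

lemma monotoneOn_Mstar (hω : ContinuousOn ω (Icc 0 T)) : MonotoneOn (Mstar ω) (Icc 0 T) :=
  fun _ hs _ ht hst =>
    csSup_le_csSup ((isCompact_Icc.image_of_continuousOn hω).bddAbove.mono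
        (image_mono (Icc_subset_Icc le_rfl ht.2)))
      ⟨ω 0, mem_image_of_mem _ ⟨le_rfl, hs.1⟩⟩ (image_mono (Icc_subset_Icc le_rfl hst))

/-- The running maximum over `[0, t]` is the supremum over `u ∈ [0, 1]` of `ω (t * u)`,
which is continuous in `t` by compactness of `[0, 1]`. -/
lemma continuousOn_Mstar (hω : ContinuousOn ω (Icc 0 T)) : ContinuousOn (Mstar ω) (Icc 0 T) := by
  rcases lt_or_ge T 0 with hT | hT
  · simp [Icc_eq_empty_of_lt hT]
  set clamp : ℝ → ℝ := fun x => max 0 (min x T)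
  have hclamp : ∀ x ∈ Icc 0 T, clamp x = x := fun x hx => by
    simp only [clamp, min_eq_left hx.2, max_eq_right hx.1]
  have hcont : Continuous fun p : ℝ × ℝ => ω (clamp (p.1 * p.2)) :=
    hω.comp_continuous (by fun_prop) fun p =>
      ⟨le_max_left _ _, max_le hT (min_le_right _ _)⟩
  refine (isCompact_Icc (a := (0 : ℝ)) (b := 1)).continuous_sSup
    (f := fun t u => ω (clamp (t * u))) hcont |>.continuousOn.congr fun t ht => ?_
  have himage : (t * ·) '' Icc (0 : ℝ) 1 = Icc 0 t := by
    rw [image_mul_left_Icc ht.1 zero_le_one, mul_zero, mul_one]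
  simp only [Mstar, ← himage, image_image]
  refine congrArg sSup (image_congr fun u hu => ?_)
  rw [hclamp]
  exact ⟨mul_nonneg ht.1 hu.1, (mul_le_of_le_one_right ht.1 hu.2).trans ht.2⟩

end RunningMax

section History

variable {Ω : Set (ℝ → ℝ)} {ω ω' : ℝ → ℝ}

lemma Hist_subset_Hist {s t : ℝ} (hst : s ≤ t) : Hist Ω t ω ⊆ Hist Ω s ω :=
  fun _ h => ⟨h.1, fun u hu => h.2 u ⟨hu.1, hu.2.trans hst⟩⟩

lemma mem_Hist_symm {t : ℝ} (hω : ω ∈ Ω) (h : ω' ∈ Hist Ω t ω) : ω ∈ Hist Ω t ω' :=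
  ⟨hω, fun u hu => (h.2 u hu).symm⟩

variable {T : ℝ} {τ : (ℝ → ℝ) → ℝ}

lemma IsStoppingTime.eq_of_mem_Hist (hτ : IsStoppingTime T Ω τ) (hω : ω ∈ Ω) {t : ℝ}
    (ht : τ ω ≤ t) (htT : t ≤ T) (h : ω' ∈ Hist Ω t ω) : τ ω' = τ ω :=
  hτ.2 ω hω t ⟨(hτ.1 ω hω).1.trans ht, htT⟩ ht ω' h.1 h.2

lemma IsStoppingTime.lt_of_mem_Hist (hτ : IsStoppingTime T Ω τ) (hω : ω ∈ Ω) {t : ℝ}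
    (ht : t < τ ω) (htT : t ≤ T) (h : ω' ∈ Hist Ω t ω) : t < τ ω' := by
  by_contra! h'
  have := hτ.eq_of_mem_Hist h.1 h' htT (mem_Hist_symm hω h)
  linarith

end History

section SigmaStar

variable {T : ℝ} {ψ : ℝ → (ℝ → ℝ) → ℝ} {ω : ℝ → ℝ}

lemma sigmaStar_le {s : ℝ} (hs : s ∈ Icc 0 T) (h : ψ s ω ≤ Mstar ω s - ω s) :
    sigmaStar T ψ ω ≤ s :=
  csInf_le ⟨0, fun _ hu => hu.1.1⟩ ⟨hs, h⟩

lemma lt_psi_of_lt_sigmaStar {s : ℝ} (hs : s ∈ Icc 0 T) (h : s < sigmaStar T ψ ω) :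
    Mstar ω s - ω s < ψ s ω :=
  lt_of_not_ge fun h' => (sigmaStar_le hs h').not_gt h

lemma sigmaStar_mem (hω : ContinuousOn ω (Icc 0 T))
    (hψc : ContinuousOn (fun t => ψ t ω) (Icc 0 T)) (hψT : ψ T ω = 0) (hT : 0 ≤ T) :
    sigmaStar T ψ ω ∈ {s ∈ Icc 0 T | ψ s ω ≤ Mstar ω s - ω s} := by
  refine isClosed_Icc.isClosed_le hψc ((continuousOn_Mstar hω).sub hω) |>.csInf_mem
    ⟨T, ⟨hT, le_rfl⟩, ?_⟩ ⟨0, fun _ hu => hu.1.1⟩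
  change ψ T ω ≤ Mstar ω T - ω T
  rw [hψT, sub_nonneg]
  exact le_csSup ((isCompact_Icc.image_of_continuousOn hω).bddAbove)
    (mem_image_of_mem ω ⟨hT, le_rfl⟩)

lemma sigmaStar_pos (hω : ContinuousOn ω (Icc 0 T))
    (hψc : ContinuousOn (fun t => ψ t ω) (Icc 0 T)) (hψT : ψ T ω = 0) (hT : 0 < T)
    (hψa : StrictAntiOn (fun t => ψ t ω) (Icc 0 T)) :
    0 < sigmaStar T ψ ω := by
  obtain ⟨⟨h0, -⟩, hle⟩ := sigmaStar_mem hω hψc hψT hT.le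
  refine h0.lt_of_ne fun h => ?_
  have hψ0 : ψ T ω < ψ 0 ω := hψa ⟨le_rfl, hT.le⟩ ⟨hT.le, le_rfl⟩ hT
  rw [← h, Mstar_zero, sub_self] at hle
  linarith

lemma regret_sigmaStar (hω : ContinuousOn ω (Icc 0 T))
    (hψc : ContinuousOn (fun t => ψ t ω) (Icc 0 T)) (hψT : ψ T ω = 0) (hT : 0 < T)
    (hψa : StrictAntiOn (fun t => ψ t ω) (Icc 0 T)) :
    regret ψ (sigmaStar T ψ) ω = ψ (sigmaStar T ψ ω) ω := by
  have hσ := sigmaStar_mem hω hψc hψT hT.le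
  have hsub : Icc 0 (sigmaStar T ψ ω) ⊆ Icc 0 T := Icc_subset_Icc le_rfl hσ.1.2
  have hcl : closure (Ico 0 (sigmaStar T ψ ω)) = Icc 0 (sigmaStar T ψ ω) :=
    closure_Ico (sigmaStar_pos hω hψc hψT hT hψa).ne
  have hgap : Mstar ω (sigmaStar T ψ ω) - ω (sigmaStar T ψ ω) ≤ ψ (sigmaStar T ψ ω) ω := by
    refine le_on_closure (s := Ico 0 (sigmaStar T ψ ω))
      (fun s hs => (lt_psi_of_lt_sigmaStar ⟨hs.1, hs.2.le.trans hσ.1.2⟩ hs.2).le) ?_ ?_ ?_ <;>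
      rw [hcl]
    · exact ((continuousOn_Mstar hω).sub hω).mono hsub
    · exact hψc.mono hsub
    · exact ⟨hσ.1.1, le_rfl⟩
  exact max_eq_right hgap

end SigmaStar

section Conditions

variable {T : ℝ} {Ω : Set (ℝ → ℝ)} {ψ : ℝ → (ℝ → ℝ) → ℝ}

lemma psi_le_Mstar_sub_iff_of_mem_Hist
    (hψh : ∀ t ∈ Icc 0 T, ∀ ω ∈ Ω, ∀ ω' ∈ Hist Ω t ω, ψ t ω' = ψ t ω)
    {t s : ℝ} {ω ω' : ℝ → ℝ} (hω : ω ∈ Ω) (h : ω' ∈ Hist Ω t ω) (hs : s ∈ Icc 0 T)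
    (hst : s ≤ t) :
    (ψ s ω' ≤ Mstar ω' s - ω' s) ↔ (ψ s ω ≤ Mstar ω s - ω s) := by
  rw [hψh s hs ω hω ω' (Hist_subset_Hist hst h), Mstar_congr h.2 hst, h.2 s ⟨hs.1, hst⟩]

lemma isStoppingTime_sigmaStar (hT : 0 ≤ T) (hΩ : ∀ ω ∈ Ω, ContinuousOn ω (Icc 0 T))
    (hψT : ∀ ω ∈ Ω, ψ T ω = 0) (hψc : ∀ ω ∈ Ω, ContinuousOn (fun t => ψ t ω) (Icc 0 T))
    (hψh : ∀ t ∈ Icc 0 T, ∀ ω ∈ Ω, ∀ ω' ∈ Hist Ω t ω, ψ t ω' = ψ t ω) :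
    IsStoppingTime T Ω (sigmaStar T ψ) := by
  refine ⟨fun ω hω => (sigmaStar_mem (hΩ ω hω) (hψc ω hω) (hψT ω hω) hT).1,
    fun ω hω t _ hσt ω' hω' hagree => ?_⟩
  have h : ω' ∈ Hist Ω t ω := ⟨hω', hagree⟩
  obtain ⟨hσ, hσle⟩ := sigmaStar_mem (hΩ ω hω) (hψc ω hω) (hψT ω hω) hT
  have hle : sigmaStar T ψ ω' ≤ sigmaStar T ψ ω :=
    sigmaStar_le hσ ((psi_le_Mstar_sub_iff_of_mem_Hist hψh hω h hσ hσt).2 hσle)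
  obtain ⟨hσ', hσle'⟩ := sigmaStar_mem (hΩ ω' hω') (hψc ω' hω') (hψT ω' hω') hT
  exact hle.antisymm <| sigmaStar_le hσ'
    ((psi_le_Mstar_sub_iff_of_mem_Hist hψh hω h hσ' (hle.trans hσt)).1 hσle')

variable {τ : (ℝ → ℝ) → ℝ} {ω : ℝ → ℝ}

lemma exists_regret_lt_of_sigmaStar_lt (hT : 0 ≤ T) (hΩ : ∀ ω ∈ Ω, ContinuousOn ω (Icc 0 T))
    (hψT : ∀ ω ∈ Ω, ψ T ω = 0) (hψc : ∀ ω ∈ Ω, ContinuousOn (fun t => ψ t ω) (Icc 0 T))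
    (hψh : ∀ t ∈ Icc 0 T, ∀ ω ∈ Ω, ∀ ω' ∈ Hist Ω t ω, ψ t ω' = ψ t ω)
    (hreach : ∀ t ∈ Icc 0 T, ∀ ω ∈ Ω, ∃ ωh ∈ Hist Ω t ω, ∀ u, t < u → u ≤ T → ωh u < ω t)
    (hτ : IsStoppingTime T Ω τ) (hω : ω ∈ Ω) (hlt : sigmaStar T ψ ω < τ ω) :
    ∃ ω' ∈ Hist Ω (sigmaStar T ψ ω) ω, regret ψ (sigmaStar T ψ) ω' < regret ψ τ ω' := by
  set s := sigmaStar T ψ ω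
  have hs : s ∈ Icc 0 T := (sigmaStar_mem (hΩ ω hω) (hψc ω hω) (hψT ω hω) hT).1
  obtain ⟨ωh, hωh, hdrop⟩ := hreach s hs ω hω
  have hωhΩ : ωh ∈ Ω := hωh.1
  have hσh : sigmaStar T ψ ωh = s :=
    (isStoppingTime_sigmaStar hT hΩ hψT hψc hψh).eq_of_mem_Hist hω le_rfl hs.2 hωh
  have hτh : s < τ ωh := hτ.lt_of_mem_Hist hω hlt hs.2 hωh
  have hτhT : τ ωh ≤ T := (hτ.1 ωh hωhΩ).2
  refine ⟨ωh, hωh, ?_⟩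
  calc regret ψ (sigmaStar T ψ) ωh = Mstar ωh s - ωh s := by
        rw [regret, hσh]
        exact max_eq_left (hσh ▸ (sigmaStar_mem (hΩ ωh hωhΩ) (hψc ωh hωhΩ) (hψT ωh hωhΩ) hT).2)
    _ < Mstar ωh (τ ωh) - ωh (τ ωh) := by
        have hmax := monotoneOn_Mstar (hΩ ωh hωhΩ) hs ⟨hs.1.trans hτh.le, hτhT⟩ hτh.le
        have hval := hdrop (τ ωh) hτh hτhT
        rw [hωh.2 s ⟨hs.1, le_rfl⟩]
        linarith
    _ ≤ regret ψ τ ωh := le_max_left _ _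

lemma regret_lt_of_lt_sigmaStar (hT : 0 < T) (hΩ : ∀ ω ∈ Ω, ContinuousOn ω (Icc 0 T))
    (hψT : ∀ ω ∈ Ω, ψ T ω = 0) (hψc : ∀ ω ∈ Ω, ContinuousOn (fun t => ψ t ω) (Icc 0 T))
    (hψa : ∀ ω ∈ Ω, StrictAntiOn (fun t => ψ t ω) (Icc 0 T))
    (hψh : ∀ t ∈ Icc 0 T, ∀ ω ∈ Ω, ∀ ω' ∈ Hist Ω t ω, ψ t ω' = ψ t ω)
    (hτ : IsStoppingTime T Ω τ) (hω : ω ∈ Ω) (hlt : τ ω < sigmaStar T ψ ω)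
    {ω' : ℝ → ℝ} (hω' : ω' ∈ Hist Ω (τ ω) ω) :
    regret ψ (sigmaStar T ψ) ω' < regret ψ τ ω' := by
  have hω'Ω : ω' ∈ Ω := hω'.1
  have ht : τ ω ∈ Icc 0 T := hτ.1 ω hω
  have hτ' : τ ω' = τ ω := hτ.eq_of_mem_Hist hω le_rfl ht.2 hω'
  have hσ' : τ ω < sigmaStar T ψ ω' :=
    (isStoppingTime_sigmaStar hT.le hΩ hψT hψc hψh).lt_of_mem_Hist hω hlt ht.2 hω'
  calc regret ψ (sigmaStar T ψ) ω' = ψ (sigmaStar T ψ ω') ω' :=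
        regret_sigmaStar (hΩ ω' hω'Ω) (hψc ω' hω'Ω) (hψT ω' hω'Ω) hT (hψa ω' hω'Ω)
    _ < ψ (τ ω) ω' := hψa ω' hω'Ω ht
        (sigmaStar_mem (hΩ ω' hω'Ω) (hψc ω' hω'Ω) (hψT ω' hω'Ω) hT.le).1 hσ'
    _ = regret ψ τ ω' := by
        rw [regret, hτ']
        exact (max_eq_right (lt_psi_of_lt_sigmaStar ht hσ').le).symm

end Conditions

theorem stmt9_general (T : ℝ) (hT : 0 < T) (Ω : Set (ℝ → ℝ))
    (hΩ : ∀ ω ∈ Ω, ContinuousOn ω (Set.Icc 0 T))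
    (ψ : ℝ → (ℝ → ℝ) → ℝ)
    (hψT : ∀ ω ∈ Ω, ψ T ω = 0)
    (hψc : ∀ ω ∈ Ω, ContinuousOn (fun t => ψ t ω) (Set.Icc 0 T))
    (hψa : ∀ ω ∈ Ω, StrictAntiOn (fun t => ψ t ω) (Set.Icc 0 T))
    (hψh : ∀ t ∈ Set.Icc 0 T, ∀ ω ∈ Ω, ∀ ω' ∈ Hist Ω t ω, ψ t ω' = ψ t ω)
    (hreach : ∀ t ∈ Set.Icc 0 T, ∀ ω ∈ Ω,
      ∃ ωh ∈ Hist Ω t ω, ∀ u, t < u → u ≤ T → ωh u < ω t) :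
    CondAB T Ω ψ (sigmaStar T ψ) := fun _ hτ _ hω =>
  ⟨exists_regret_lt_of_sigmaStar_lt hT.le hΩ hψT hψc hψh hreach hτ hω,
    fun hlt _ hω' => regret_lt_of_lt_sigmaStar hT hΩ hψT hψc hψa hψh hτ hω hlt hω'⟩

/-- Theorem 2, necessity: under the reaching assumption, `σ*`
satisfies conditions (A) and (B): for any stopping time `τ` and any `ω ∈ Ω`,
(A) if `τ(ω) > σ*(ω)` then `R(σ*(ω),ω;τ,ω') > R(σ*(ω),ω;σ*,ω')` for some
`ω' ∈ 𝒜(σ*(ω),ω)`, and (B) if `τ(ω) < σ*(ω)` then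
`R(τ(ω),ω;τ,ω') > R(τ(ω),ω;σ*,ω')` for all `ω' ∈ 𝒜(τ(ω),ω)`. -/
theorem stmt9 (T : ℝ) (hT : 0 < T) (Ω : Set (ℝ → ℝ))
    (hΩ : ∀ ω ∈ Ω, ContinuousOn ω (Set.Icc 0 T))
    (ψ : ℝ → (ℝ → ℝ) → ℝ)
    (hψT : ∀ ω ∈ Ω, ψ T ω = 0)
    (hψnn : ∀ ω ∈ Ω, ∀ t ∈ Set.Icc 0 T, 0 ≤ ψ t ω)
    (hψc : ∀ ω ∈ Ω, ContinuousOn (fun t => ψ t ω) (Set.Icc 0 T))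
    (hψa : ∀ ω ∈ Ω, StrictAntiOn (fun t => ψ t ω) (Set.Icc 0 T))
    (hψh : ∀ t ∈ Set.Icc 0 T, ∀ ω ∈ Ω, ∀ ω' ∈ Hist Ω t ω, ψ t ω' = ψ t ω)
    (hreach : ∀ t ∈ Set.Icc 0 T, ∀ ω ∈ Ω,
      ∃ ωh ∈ Hist Ω t ω, ∀ u, t < u → u ≤ T → ωh u < ω t) :
    CondAB T Ω ψ (sigmaStar T ψ) :=
  stmt9_general T hT Ω hΩ ψ hψT hψc hψa hψh hreach

end SellingRegret

end
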